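/- arXiv:1705.10528 — 3 statements merged into one kernel-verified Lean document; each statement's English description precedes it below -/
import Mathlib

section
/- For any function f : S → ℝ and any two policies π' and π with π(a|s) > 0 for all s, a, the performance difference is bounded on both sides: L_{π,f}(π')/(1-γ) - (2γ ε_f^{π'}/(1-γ)²)·E_{s∼d^π}[D_TV(π'‖π)[s]] ≤ J(π') - J(π) ≤ L_{π,f}(π')/(1-γ) + (2γ ε_f^{π'}/(1-γ)²)·E_{s∼d^π}[D_TV(π'‖π)[s]]. Moreover, when π' = π all three expressions are identically zero. -/
open BigOperators Finset Matrix

noncomputable section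

variable {S A : Type*}

/-- Policy transition matrix (column-stochastic): entry `(s', s)` is
`P_pol(s'|s) = ∑ a, P(s'|s,a) pol(a|s)`. -/
def Pmat [Fintype A] (P : S → A → S → ℝ) (pol : S → A → ℝ) : Matrix S S ℝ :=
  fun s' s => ∑ a, P s a s' * pol s a

/-- Discounted future state distribution `d^π = (1-γ) ∑_t γ^t P_π^t μ`. -/
def dFut [Fintype S] [DecidableEq S] [Fintype A] (γ : ℝ) (P : S → A → S → ℝ)
    (μ : S → ℝ) (pol : S → A → ℝ) : S → ℝ :=
  fun s => (1 - γ) * ∑' t : ℕ, γ ^ t * ((Pmat P pol ^ t) *ᵥ μ) s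

/-- Discounted return `J(π)` (also used as the cost return `J_C(π)` with a cost `C`
in place of the reward `R`). -/
def Jret [Fintype S] [DecidableEq S] [Fintype A] (γ : ℝ) (P : S → A → S → ℝ)
    (R : S → A → S → ℝ) (μ : S → ℝ) (pol : S → A → ℝ) : ℝ :=
  (1 / (1 - γ)) * ∑ s, dFut γ P μ pol s * (∑ a, pol s a * (∑ s', P s a s' * R s a s'))

/-- Total variational divergence between action distributions at state `s`. -/
def DTV [Fintype A] (pol' pol : S → A → ℝ) (s : S) : ℝ :=
  (1 / 2) * ∑ a, |pol' s a - pol s a|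

/-- Kullback–Leibler divergence between action distributions at state `s`. -/
def DKL [Fintype A] (pol' pol : S → A → ℝ) (s : S) : ℝ :=
  ∑ a, pol' s a * Real.log (pol' s a / pol s a)

/-- Advantage function `A^π(s,a) = Q^π(s,a) - V^π(s)` built from a value function `V`
(also used for cost advantages with a cost `C` in place of `R`). -/
def Adv [Fintype S] (γ : ℝ) (P : S → A → S → ℝ) (R : S → A → S → ℝ)
    (V : S → ℝ) (s : S) (a : A) : ℝ :=
  (∑ s', P s a s' * (R s a s' + γ * V s')) - V s

/-- `ε_f^{π'} = max_s |E_{a∼π'(·|s), s'∼P}[δ_f(s,a,s')]|` where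
`δ_f(s,a,s') = R(s,a,s') + γ f(s') - f(s)`. -/
def epsF [Fintype S] [Fintype A] (γ : ℝ) (P : S → A → S → ℝ) (R : S → A → S → ℝ)
    (f : S → ℝ) (pol' : S → A → ℝ) : ℝ :=
  ⨆ s, |∑ a, pol' s a * (∑ s', P s a s' * (R s a s' + γ * f s' - f s))|

/-- Surrogate `L_{π,f}(π') = E_{s∼d^π, a∼π, s'∼P}[(π'(a|s)/π(a|s) - 1) δ_f(s,a,s')]`. -/
def Lsurr [Fintype S] [DecidableEq S] [Fintype A] (γ : ℝ) (P : S → A → S → ℝ)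
    (R : S → A → S → ℝ) (μ : S → ℝ) (f : S → ℝ) (pol pol' : S → A → ℝ) : ℝ :=
  ∑ s, dFut γ P μ pol s * (∑ a, pol s a * (∑ s', P s a s' *
    ((pol' s a / pol s a - 1) * (R s a s' + γ * f s' - f s))))


/-!
Write `δ_ρ(s)` for the expected TD error `E_{a∼ρ(·|s), s'∼P}[δ_f(s,a,s')]`. The Bellman flow
equation `d^ρ = (1-γ) μ + γ P_ρ d^ρ` turns `⟨d^ρ, δ_ρ⟩` into `(1-γ) (J(ρ) - ⟨μ, f⟩)`, hence
`(1-γ) (J(π') - J(π)) = ⟨d^π, δ_{π'} - δ_π⟩ + ⟨d^{π'} - d^π, δ_{π'}⟩`. The first term is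
`L_{π,f}(π')` by importance sampling, the second is at most `ε_f^{π'} ‖d^{π'} - d^π‖₁`.
Subtracting the two flow equations gives
`d^{π'} - d^π = γ P_{π'} (d^{π'} - d^π) + γ (P_{π'} - P_π) d^π`; as `P_{π'}` is an `ℓ¹`
contraction and `‖(P_{π'} - P_π) d^π‖₁ ≤ 2 E_{d^π}[D_TV]`, this yields
`(1-γ) ‖d^{π'} - d^π‖₁ ≤ 2γ E_{d^π}[D_TV]`.
-/

section L1Norm

variable {m n : Type*} [Fintype m] [Fintype n]

theorem sum_abs_mulVec_le (M : Matrix m n ℝ) (v : n → ℝ) :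
    ∑ i, |(M *ᵥ v) i| ≤ ∑ j, |v j| * ∑ i, |M i j| := by
  calc ∑ i, |(M *ᵥ v) i| ≤ ∑ i, ∑ j, |M i j| * |v j| :=
        sum_le_sum fun i _ => (abs_sum_le_sum_abs _ _).trans_eq (by simp only [abs_mul])
    _ = ∑ j, |v j| * ∑ i, |M i j| := by
        rw [sum_comm]
        simp only [mul_sum, mul_comm]

theorem sum_abs_mulVec_le_of_sum_abs_le_one (M : Matrix m n ℝ) (hM : ∀ j, ∑ i, |M i j| ≤ 1)
    (v : n → ℝ) : ∑ i, |(M *ᵥ v) i| ≤ ∑ j, |v j| :=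
  (sum_abs_mulVec_le M v).trans <| sum_le_sum fun j _ =>
    mul_le_of_le_one_right (abs_nonneg _) (hM j)

theorem abs_dotProduct_le_iSup_abs_mul (x y : n → ℝ) :
    |x ⬝ᵥ y| ≤ (⨆ i, |y i|) * ∑ i, |x i| := by
  refine (abs_sum_le_sum_abs _ _).trans ?_
  rw [mul_sum]
  refine sum_le_sum fun i _ => ?_
  rw [abs_mul, mul_comm]
  exact mul_le_mul_of_nonneg_right
    (le_ciSup (f := fun i => |y i|) (Set.finite_range _).bddAbove i) (abs_nonneg _)

end L1Norm

section DiscountedSeries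

variable {n : Type*} [Fintype n] [DecidableEq n] (M : Matrix n n ℝ)

theorem pow_mulVec_nonneg (hM : ∀ i j, 0 ≤ M i j) {v : n → ℝ} (hv : ∀ j, 0 ≤ v j) (t : ℕ)
    (i : n) : 0 ≤ (M ^ t *ᵥ v) i := by
  induction t generalizing i with
  | zero => simpa using hv i
  | succ t ih =>
    rw [pow_succ', ← mulVec_mulVec]
    exact sum_nonneg fun j _ => mul_nonneg (hM i j) (ih j)

theorem sum_abs_pow_mulVec_le (hM : ∀ j, ∑ i, |M i j| ≤ 1) (v : n → ℝ) (t : ℕ) :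
    ∑ i, |(M ^ t *ᵥ v) i| ≤ ∑ j, |v j| := by
  induction t with
  | zero => simp
  | succ t ih =>
    rw [pow_succ', ← mulVec_mulVec]
    exact (sum_abs_mulVec_le_of_sum_abs_le_one M hM _).trans ih

theorem summable_pow_mulVec (hM : ∀ j, ∑ i, |M i j| ≤ 1) {γ : ℝ} (hγ : |γ| < 1)
    (v : n → ℝ) (i : n) : Summable fun t : ℕ => γ ^ t * (M ^ t *ᵥ v) i := by
  refine Summable.of_norm_bounded
    ((summable_geometric_of_lt_one (abs_nonneg γ) hγ).mul_right (∑ j, |v j|)) fun t => ?_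
  rw [Real.norm_eq_abs, abs_mul, abs_pow]
  gcongr
  exact (single_le_sum (fun j _ => abs_nonneg ((M ^ t *ᵥ v) j)) (mem_univ i)).trans
    (sum_abs_pow_mulVec_le M hM v t)

theorem tsum_pow_mulVec_eq (hM : ∀ j, ∑ i, |M i j| ≤ 1) {γ : ℝ} (hγ : |γ| < 1)
    (v : n → ℝ) (i : n) :
    ∑' t : ℕ, γ ^ t * (M ^ t *ᵥ v) i
      = v i + γ * (M *ᵥ fun j => ∑' t : ℕ, γ ^ t * (M ^ t *ᵥ v) j) i := by
  have hsum j := (summable_pow_mulVec M hM hγ v j).hasSum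
  have hshift : HasSum (fun t : ℕ => γ ^ (t + 1) * (M ^ (t + 1) *ᵥ v) i)
      (γ * (M *ᵥ fun j => ∑' t : ℕ, γ ^ t * (M ^ t *ᵥ v) j) i) := by
    have hterm : (fun t : ℕ => γ ^ (t + 1) * (M ^ (t + 1) *ᵥ v) i)
        = fun t => γ * ∑ j, M i j * (γ ^ t * (M ^ t *ᵥ v) j) := by
      ext t
      rw [pow_succ' M, ← mulVec_mulVec, pow_succ' γ]
      change γ * γ ^ t * ∑ j, M i j * (M ^ t *ᵥ v) j = _
      rw [mul_sum, mul_sum]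
      exact sum_congr rfl fun j _ => by ring
    rw [hterm]
    exact (hasSum_sum fun j _ => (hsum j).mul_left (M i j)).mul_left γ
  rw [(hsum i).unique (HasSum.zero_add (f := fun t : ℕ => γ ^ t * (M ^ t *ᵥ v) i) hshift)]
  simp

end DiscountedSeries

def expectedTD [Fintype S] [Fintype A] (γ : ℝ) (P : S → A → S → ℝ) (R : S → A → S → ℝ)
    (f : S → ℝ) (pol : S → A → ℝ) (s : S) : ℝ :=
  ∑ a, pol s a * ∑ s', P s a s' * (R s a s' + γ * f s' - f s)

theorem Pmat_sub [Fintype A] (P : S → A → S → ℝ) (pol' pol : S → A → ℝ) :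
    Pmat P pol' - Pmat P pol = Pmat P (pol' - pol) := by
  ext s' s
  simp only [Pmat, Matrix.sub_apply, Pi.sub_apply, mul_sub, sum_sub_distrib]

section PolicyMatrix

variable [Fintype S] [Fintype A] {P : S → A → S → ℝ}

theorem sum_abs_Pmat_le (hP0 : ∀ s a s', 0 ≤ P s a s') (hP1 : ∀ s a, ∑ s', P s a s' = 1)
    (pol : S → A → ℝ) (s : S) : ∑ s', |Pmat P pol s' s| ≤ ∑ a, |pol s a| :=
  calc ∑ s', |Pmat P pol s' s| ≤ ∑ s', ∑ a, P s a s' * |pol s a| :=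
        sum_le_sum fun s' _ => (abs_sum_le_sum_abs _ _).trans_eq
          (by simp only [abs_mul, abs_of_nonneg (hP0 _ _ _)])
    _ = ∑ a, |pol s a| := by
        rw [sum_comm]
        simp only [← sum_mul, hP1, one_mul]

theorem sum_abs_Pmat_le_one (hP0 : ∀ s a s', 0 ≤ P s a s') (hP1 : ∀ s a, ∑ s', P s a s' = 1)
    {pol : S → A → ℝ} (hpol0 : ∀ s a, 0 ≤ pol s a) (hpol1 : ∀ s, ∑ a, pol s a = 1) (s : S) :
    ∑ s', |Pmat P pol s' s| ≤ 1 :=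
  (sum_abs_Pmat_le hP0 hP1 pol s).trans_eq (by simp only [abs_of_nonneg (hpol0 s _), hpol1])

theorem expectedTD_eq (hP1 : ∀ s a, ∑ s', P s a s' = 1) {pol : S → A → ℝ}
    (hpol1 : ∀ s, ∑ a, pol s a = 1) (γ : ℝ) (R : S → A → S → ℝ) (f : S → ℝ) (s : S) :
    expectedTD γ P R f pol s
      = (∑ a, pol s a * ∑ s', P s a s' * R s a s') + γ * (f ᵥ* Pmat P pol) s - f s := by
  have hf : ∑ a, pol s a * ∑ s', P s a s' * f s' = (f ᵥ* Pmat P pol) s := by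
    simp only [vecMul, dotProduct, Pmat, mul_sum]
    rw [sum_comm]
    exact sum_congr rfl fun s' _ => sum_congr rfl fun a _ => by ring
  have hfs : ∑ a, pol s a * ∑ s', P s a s' * f s = f s := by
    simp only [← sum_mul, hP1, one_mul, hpol1]
  rw [← hf, ← hfs, expectedTD, mul_sum, ← sum_add_distrib, ← sum_sub_distrib]
  refine sum_congr rfl fun a _ => ?_
  simp only [mul_sum, ← sum_add_distrib, ← sum_sub_distrib]
  exact sum_congr rfl fun s' _ => by ring

variable [DecidableEq S] {γ : ℝ} (μ : S → ℝ)

theorem dFut_nonneg (hγ0 : 0 ≤ γ) (hγ1 : γ < 1) (hP0 : ∀ s a s', 0 ≤ P s a s')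
    (hμ0 : ∀ s, 0 ≤ μ s) {pol : S → A → ℝ} (hpol0 : ∀ s a, 0 ≤ pol s a) (s : S) :
    0 ≤ dFut γ P μ pol s :=
  mul_nonneg (by linarith) <| tsum_nonneg fun t => mul_nonneg (pow_nonneg hγ0 t) <|
    pow_mulVec_nonneg _ (fun _ _ => sum_nonneg fun a _ => mul_nonneg (hP0 _ _ _) (hpol0 _ a))
      hμ0 t s

theorem dFut_flow (hγ0 : 0 ≤ γ) (hγ1 : γ < 1) (hP0 : ∀ s a s', 0 ≤ P s a s')
    (hP1 : ∀ s a, ∑ s', P s a s' = 1) {pol : S → A → ℝ} (hpol0 : ∀ s a, 0 ≤ pol s a)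
    (hpol1 : ∀ s, ∑ a, pol s a = 1) (s : S) :
    dFut γ P μ pol s = (1 - γ) * μ s + γ * (Pmat P pol *ᵥ dFut γ P μ pol) s := by
  have hseries := tsum_pow_mulVec_eq (Pmat P pol) (sum_abs_Pmat_le_one hP0 hP1 hpol0 hpol1)
    (abs_lt.2 ⟨by linarith, hγ1⟩) μ s
  have hdFut : dFut γ P μ pol = (1 - γ) • fun j => ∑' t : ℕ, γ ^ t * (Pmat P pol ^ t *ᵥ μ) j :=
    rfl
  rw [hdFut, mulVec_smul, Pi.smul_apply, Pi.smul_apply, smul_eq_mul, smul_eq_mul, hseries]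
  ring

theorem dFut_dotProduct_expectedTD (hγ0 : 0 ≤ γ) (hγ1 : γ < 1) (hP0 : ∀ s a s', 0 ≤ P s a s')
    (hP1 : ∀ s a, ∑ s', P s a s' = 1) {pol : S → A → ℝ} (hpol0 : ∀ s a, 0 ≤ pol s a)
    (hpol1 : ∀ s, ∑ a, pol s a = 1) (R : S → A → S → ℝ) (f : S → ℝ) :
    dFut γ P μ pol ⬝ᵥ expectedTD γ P R f pol
      = (1 - γ) * Jret γ P R μ pol - (1 - γ) * (μ ⬝ᵥ f) := by
  set d := dFut γ P μ pol
  set r : S → ℝ := fun s => ∑ a, pol s a * ∑ s', P s a s' * R s a s'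
  have hδ : expectedTD γ P R f pol = r + γ • (f ᵥ* Pmat P pol) - f :=
    funext (expectedTD_eq hP1 hpol1 γ R f)
  have hJ : (1 - γ) * Jret γ P R μ pol = d ⬝ᵥ r := by
    rw [Jret, ← mul_assoc, mul_one_div_cancel (by linarith), one_mul]
    rfl
  have hflow : γ • (Pmat P pol *ᵥ d) = d - (1 - γ) • μ := by
    ext s
    simp only [Pi.smul_apply, Pi.sub_apply, smul_eq_mul]
    linarith [dFut_flow μ hγ0 hγ1 hP0 hP1 hpol0 hpol1 s]
  have hshift : γ * (d ⬝ᵥ (f ᵥ* Pmat P pol)) = f ⬝ᵥ d - (1 - γ) * (μ ⬝ᵥ f) := by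
    rw [dotProduct_comm, ← dotProduct_mulVec, ← smul_eq_mul, ← dotProduct_smul, hflow,
      dotProduct_sub, dotProduct_smul, smul_eq_mul, dotProduct_comm f μ]
  rw [hδ, dotProduct_sub, dotProduct_add, dotProduct_smul, smul_eq_mul, hshift, ← hJ,
    dotProduct_comm d f]
  ring

theorem Lsurr_eq {pol : S → A → ℝ} (hpol : ∀ s a, pol s a ≠ 0) (pol' : S → A → ℝ)
    (R : S → A → S → ℝ) (f : S → ℝ) :
    Lsurr γ P R μ f pol pol'
      = dFut γ P μ pol ⬝ᵥ (expectedTD γ P R f pol' - expectedTD γ P R f pol) := by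
  refine sum_congr rfl fun s _ => congrArg _ ?_
  simp only [Pi.sub_apply, expectedTD, ← sum_sub_distrib]
  refine sum_congr rfl fun a _ => ?_
  simp only [mul_left_comm (P s a _), ← mul_sum]
  field_simp [hpol s a]

theorem performance_difference (hγ0 : 0 ≤ γ) (hγ1 : γ < 1) (hP0 : ∀ s a s', 0 ≤ P s a s')
    (hP1 : ∀ s a, ∑ s', P s a s' = 1) {pol pol' : S → A → ℝ} (hpol0 : ∀ s a, 0 < pol s a)
    (hpol1 : ∀ s, ∑ a, pol s a = 1) (hpol'0 : ∀ s a, 0 ≤ pol' s a)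
    (hpol'1 : ∀ s, ∑ a, pol' s a = 1) (R : S → A → S → ℝ) (f : S → ℝ) :
    (1 - γ) * (Jret γ P R μ pol' - Jret γ P R μ pol)
      = Lsurr γ P R μ f pol pol'
        + (dFut γ P μ pol' - dFut γ P μ pol) ⬝ᵥ expectedTD γ P R f pol' := by
  rw [Lsurr_eq μ (fun s a => (hpol0 s a).ne'), sub_dotProduct, dotProduct_sub]
  linear_combination
    dFut_dotProduct_expectedTD μ hγ0 hγ1 hP0 hP1 (fun s a => (hpol0 s a).le) hpol1 R f
      - dFut_dotProduct_expectedTD μ hγ0 hγ1 hP0 hP1 hpol'0 hpol'1 R f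

theorem sum_abs_dFut_sub_le (hγ0 : 0 ≤ γ) (hγ1 : γ < 1) (hP0 : ∀ s a s', 0 ≤ P s a s')
    (hP1 : ∀ s a, ∑ s', P s a s' = 1) (hμ0 : ∀ s, 0 ≤ μ s) {pol pol' : S → A → ℝ}
    (hpol0 : ∀ s a, 0 ≤ pol s a) (hpol1 : ∀ s, ∑ a, pol s a = 1)
    (hpol'0 : ∀ s a, 0 ≤ pol' s a) (hpol'1 : ∀ s, ∑ a, pol' s a = 1) :
    (1 - γ) * ∑ s, |dFut γ P μ pol' s - dFut γ P μ pol s|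
      ≤ 2 * γ * ∑ s, dFut γ P μ pol s * DTV pol' pol s := by
  set d := dFut γ P μ pol
  set d' := dFut γ P μ pol'
  have hdiff s : d' s - d s
      = γ * ((Pmat P pol' *ᵥ (d' - d)) s + (Pmat P (pol' - pol) *ᵥ d) s) := by
    rw [← Pmat_sub, sub_mulVec, mulVec_sub]
    simp only [Pi.sub_apply]
    linear_combination dFut_flow μ hγ0 hγ1 hP0 hP1 hpol'0 hpol'1 s
      - dFut_flow μ hγ0 hγ1 hP0 hP1 hpol0 hpol1 s
  have hcontract : ∑ s, |(Pmat P pol' *ᵥ (d' - d)) s| ≤ ∑ s, |d' s - d s| :=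
    sum_abs_mulVec_le_of_sum_abs_le_one _ (sum_abs_Pmat_le_one hP0 hP1 hpol'0 hpol'1) _
  have hdrift : ∑ s, |(Pmat P (pol' - pol) *ᵥ d) s| ≤ 2 * ∑ s, d s * DTV pol' pol s := by
    refine (sum_abs_mulVec_le _ d).trans ?_
    rw [mul_sum]
    refine sum_le_sum fun s _ => ?_
    rw [abs_of_nonneg (dFut_nonneg μ hγ0 hγ1 hP0 hμ0 hpol0 s), DTV]
    calc d s * ∑ s', |Pmat P (pol' - pol) s' s| ≤ d s * ∑ a, |pol' s a - pol s a| :=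
          mul_le_mul_of_nonneg_left (sum_abs_Pmat_le hP0 hP1 _ s)
            (dFut_nonneg μ hγ0 hγ1 hP0 hμ0 hpol0 s)
      _ = 2 * (d s * (1 / 2 * ∑ a, |pol' s a - pol s a|)) := by ring
  have hbound : ∑ s, |d' s - d s| ≤ γ * (∑ s, |d' s - d s| + 2 * ∑ s, d s * DTV pol' pol s) :=
    calc ∑ s, |d' s - d s|
        ≤ ∑ s, γ * (|(Pmat P pol' *ᵥ (d' - d)) s| + |(Pmat P (pol' - pol) *ᵥ d) s|) :=
          sum_le_sum fun s _ => by
            rw [hdiff, abs_mul, abs_of_nonneg hγ0]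
            exact mul_le_mul_of_nonneg_left (abs_add_le _ _) hγ0
      _ ≤ γ * (∑ s, |d' s - d s| + 2 * ∑ s, d s * DTV pol' pol s) := by
          rw [← mul_sum, sum_add_distrib]
          gcongr
  linear_combination hbound

theorem abs_Jret_sub_sub_Lsurr_div_le (hγ0 : 0 ≤ γ) (hγ1 : γ < 1)
    (hP0 : ∀ s a s', 0 ≤ P s a s') (hP1 : ∀ s a, ∑ s', P s a s' = 1) (hμ0 : ∀ s, 0 ≤ μ s)
    {pol pol' : S → A → ℝ} (hpol0 : ∀ s a, 0 < pol s a) (hpol1 : ∀ s, ∑ a, pol s a = 1)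
    (hpol'0 : ∀ s a, 0 ≤ pol' s a) (hpol'1 : ∀ s, ∑ a, pol' s a = 1)
    (R : S → A → S → ℝ) (f : S → ℝ) :
    |Jret γ P R μ pol' - Jret γ P R μ pol - Lsurr γ P R μ f pol pol' / (1 - γ)|
      ≤ 2 * γ * epsF γ P R f pol' / (1 - γ) ^ 2 * ∑ s, dFut γ P μ pol s * DTV pol' pol s := by
  have hc : 0 < 1 - γ := by linarith
  set e := dFut γ P μ pol' - dFut γ P μ pol
  have hε0 : 0 ≤ epsF γ P R f pol' := Real.iSup_nonneg fun s => abs_nonneg _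
  have herr : |e ⬝ᵥ expectedTD γ P R f pol'| ≤ epsF γ P R f pol' * ∑ s, |e s| :=
    abs_dotProduct_le_iSup_abs_mul _ _
  have hl1 := sum_abs_dFut_sub_le μ hγ0 hγ1 hP0 hP1 hμ0 (fun s a => (hpol0 s a).le) hpol1
    hpol'0 hpol'1
  rw [show Jret γ P R μ pol' - Jret γ P R μ pol - Lsurr γ P R μ f pol pol' / (1 - γ)
      = e ⬝ᵥ expectedTD γ P R f pol' / (1 - γ) by
        field_simp
        linarith [performance_difference μ hγ0 hγ1 hP0 hP1 hpol0 hpol1 hpol'0 hpol'1 R f],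
    abs_div, abs_of_pos hc, div_le_iff₀ hc]
  calc _ ≤ epsF γ P R f pol' * ∑ s, |e s| := herr
    _ ≤ epsF γ P R f pol' * ((2 * γ * ∑ s, dFut γ P μ pol s * DTV pol' pol s) / (1 - γ)) := by
        gcongr
        rw [le_div_iff₀ hc, mul_comm]
        exact hl1
    _ = _ := by field_simp

end PolicyMatrix

theorem policy_performance_bound_general
    [Fintype S] [DecidableEq S] [Fintype A]
    (γ : ℝ) (hγ0 : 0 ≤ γ) (hγ1 : γ < 1)
    (P : S → A → S → ℝ) (hP0 : ∀ s a s', 0 ≤ P s a s')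
    (hP1 : ∀ s a, (∑ s', P s a s') = 1)
    (μ : S → ℝ) (hμ0 : ∀ s, 0 ≤ μ s)
    (R : S → A → S → ℝ) (f : S → ℝ)
    (pol pol' : S → A → ℝ)
    (hpol0 : ∀ s a, 0 < pol s a) (hpol1 : ∀ s, (∑ a, pol s a) = 1)
    (hpol'0 : ∀ s a, 0 ≤ pol' s a) (hpol'1 : ∀ s, (∑ a, pol' s a) = 1) :
    (Lsurr γ P R μ f pol pol' / (1 - γ)
        - 2 * γ * epsF γ P R f pol' / (1 - γ) ^ 2
          * (∑ s, dFut γ P μ pol s * DTV pol' pol s)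
      ≤ Jret γ P R μ pol' - Jret γ P R μ pol)
    ∧ (Jret γ P R μ pol' - Jret γ P R μ pol
      ≤ Lsurr γ P R μ f pol pol' / (1 - γ)
        + 2 * γ * epsF γ P R f pol' / (1 - γ) ^ 2
          * (∑ s, dFut γ P μ pol s * DTV pol' pol s))
    ∧ (pol' = pol →
        (Lsurr γ P R μ f pol pol' / (1 - γ)
          - 2 * γ * epsF γ P R f pol' / (1 - γ) ^ 2
            * (∑ s, dFut γ P μ pol s * DTV pol' pol s) = 0)
        ∧ Jret γ P R μ pol' - Jret γ P R μ pol = 0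
        ∧ (Lsurr γ P R μ f pol pol' / (1 - γ)
          + 2 * γ * epsF γ P R f pol' / (1 - γ) ^ 2
            * (∑ s, dFut γ P μ pol s * DTV pol' pol s) = 0)) := by
  obtain ⟨hlo, hhi⟩ := abs_le.1 <|
    abs_Jret_sub_sub_Lsurr_div_le μ hγ0 hγ1 hP0 hP1 hμ0 hpol0 hpol1 hpol'0 hpol'1 R f
  refine ⟨by linarith, by linarith, fun hpol => ?_⟩
  subst hpol
  have hL : Lsurr γ P R μ f pol' pol' = 0 := by
    simp [Lsurr_eq μ fun s a => (hpol0 s a).ne']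
  have hK : ∑ s, dFut γ P μ pol' s * DTV pol' pol' s = 0 := by simp [DTV]
  simp [hL, hK]

/-- **Theorem 1 (policy performance bound).**  For any `f : S → ℝ` and any policies `pol'`, `pol`
with `pol` everywhere positive,
`D⁻ ≤ J(π') - J(π) ≤ D⁺` where
`D^± = L_{π,f}(π')/(1-γ) ± (2γ ε_f^{π'}/(1-γ)²) E_{s∼d^π}[D_TV(π'‖π)[s]]`;
moreover when `π' = π` all three expressions are identically zero. -/
theorem policy_performance_bound
    [Fintype S] [DecidableEq S] [Nonempty S] [Fintype A] [Nonempty A]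
    (γ : ℝ) (hγ0 : 0 ≤ γ) (hγ1 : γ < 1)
    (P : S → A → S → ℝ) (hP0 : ∀ s a s', 0 ≤ P s a s')
    (hP1 : ∀ s a, (∑ s', P s a s') = 1)
    (μ : S → ℝ) (hμ0 : ∀ s, 0 ≤ μ s) (hμ1 : (∑ s, μ s) = 1)
    (R : S → A → S → ℝ) (f : S → ℝ)
    (pol pol' : S → A → ℝ)
    (hpol0 : ∀ s a, 0 < pol s a) (hpol1 : ∀ s, (∑ a, pol s a) = 1)
    (hpol'0 : ∀ s a, 0 ≤ pol' s a) (hpol'1 : ∀ s, (∑ a, pol' s a) = 1) :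
    (Lsurr γ P R μ f pol pol' / (1 - γ)
        - 2 * γ * epsF γ P R f pol' / (1 - γ) ^ 2
          * (∑ s, dFut γ P μ pol s * DTV pol' pol s)
      ≤ Jret γ P R μ pol' - Jret γ P R μ pol)
    ∧ (Jret γ P R μ pol' - Jret γ P R μ pol
      ≤ Lsurr γ P R μ f pol pol' / (1 - γ)
        + 2 * γ * epsF γ P R f pol' / (1 - γ) ^ 2
          * (∑ s, dFut γ P μ pol s * DTV pol' pol s))
    ∧ (pol' = pol →
        (Lsurr γ P R μ f pol pol' / (1 - γ)
          - 2 * γ * epsF γ P R f pol' / (1 - γ) ^ 2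
            * (∑ s, dFut γ P μ pol s * DTV pol' pol s) = 0)
        ∧ Jret γ P R μ pol' - Jret γ P R μ pol = 0
        ∧ (Lsurr γ P R μ f pol pol' / (1 - γ)
          + 2 * γ * epsF γ P R f pol' / (1 - γ) ^ 2
            * (∑ s, dFut γ P μ pol s * DTV pol' pol s) = 0)) :=
  policy_performance_bound_general γ hγ0 hγ1 P hP0 hP1 μ hμ0 R f pol pol' hpol0 hpol1 hpol'0 hpol'1
end
end

section
/- For any function f : S → ℝ and any policy π, J(π) = E_{s∼μ}[f(s)] + (1/(1-γ)) E_{s∼d^π, a∼π(·|s), s'∼P(·|s,a)}[R(s,a,s') + γ f(s') - f(s)]. -/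
open BigOperators Finset Matrix

noncomputable section

variable {S A : Type*}

/-! Since `P_π` is column stochastic, the series defining `d^π` converges and satisfies the flow
equation `d^π = (1 - γ) μ + γ P_π d^π`. Pairing it with `f` shows that the shaping term
`γ f(s') - f(s)` has expectation `-(1 - γ) E_μ[f]` under `d^π`, which is the baseline. -/

namespace Matrix

variable {n : Type*} [Fintype n] {M : Matrix n n ℝ} {γ : ℝ}

theorem dotProduct_smul_vecMul_sub_of_eq {μ d : n → ℝ} (hd : d = (1 - γ) • μ + γ • M *ᵥ d)
    (f : n → ℝ) : d ⬝ᵥ (γ • (f ᵥ* M) - f) = -((1 - γ) * (μ ⬝ᵥ f)) := by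
  rw [dotProduct_sub, dotProduct_smul, dotProduct_comm d, ← dotProduct_mulVec, dotProduct_comm d]
  nth_rewrite 2 [hd]
  simp only [add_dotProduct, smul_dotProduct, smul_eq_mul, dotProduct_comm f]
  ring

variable [DecidableEq n]

theorem sum_abs_mulVec_le_of_mem_colStochastic (hM : M ∈ colStochastic ℝ n) (v : n → ℝ) :
    ∑ i, |(M *ᵥ v) i| ≤ ∑ i, |v i| :=
  calc ∑ i, |(M *ᵥ v) i| ≤ ∑ i, ∑ j, M i j * |v j| := by
        gcongr with i
        refine (abs_sum_le_sum_abs _ _).trans_eq (sum_congr rfl fun j _ => ?_)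
        rw [abs_mul, abs_of_nonneg (hM.1 i j)]
    _ = ∑ i, |v i| := by
        rw [sum_comm]
        simp only [← sum_mul, sum_col_of_mem_colStochastic hM, one_mul]

theorem abs_pow_mulVec_le_of_mem_colStochastic (hM : M ∈ colStochastic ℝ n) (v : n → ℝ)
    (t : ℕ) (i : n) : |(M ^ t *ᵥ v) i| ≤ ∑ j, |v j| :=
  (single_le_sum (fun j _ => abs_nonneg ((M ^ t *ᵥ v) j)) (mem_univ i)).trans
    (sum_abs_mulVec_le_of_mem_colStochastic (pow_mem hM t) v)

theorem summable_pow_smul_pow_mulVec (hM : M ∈ colStochastic ℝ n) (hγ0 : 0 ≤ γ) (hγ1 : γ < 1)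
    (v : n → ℝ) : Summable fun t : ℕ => γ ^ t • (M ^ t *ᵥ v) := by
  refine Pi.summable.2 fun i => .of_norm_bounded
    ((summable_geometric_of_lt_one hγ0 hγ1).mul_right (∑ j, |v j|)) fun t => ?_
  rw [Pi.smul_apply, smul_eq_mul, Real.norm_eq_abs, abs_mul, abs_pow, abs_of_nonneg hγ0]
  exact mul_le_mul_of_nonneg_left (abs_pow_mulVec_le_of_mem_colStochastic hM v t i)
    (pow_nonneg hγ0 t)

theorem tsum_pow_smul_pow_mulVec_eq (hM : M ∈ colStochastic ℝ n) (hγ0 : 0 ≤ γ) (hγ1 : γ < 1)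
    (v : n → ℝ) :
    ∑' t : ℕ, γ ^ t • (M ^ t *ᵥ v) = v + γ • M *ᵥ ∑' t : ℕ, γ ^ t • (M ^ t *ᵥ v) := by
  have hs := summable_pow_smul_pow_mulVec hM hγ0 hγ1 v
  have hMs : M *ᵥ ∑' t : ℕ, γ ^ t • (M ^ t *ᵥ v) = ∑' t : ℕ, M *ᵥ (γ ^ t • (M ^ t *ᵥ v)) :=
    (mulVecLin M).toContinuousLinearMap.map_tsum hs
  have hMs' : Summable fun t : ℕ => M *ᵥ (γ ^ t • (M ^ t *ᵥ v)) :=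
    (mulVecLin M).toContinuousLinearMap.summable hs
  rw [hMs, ← hMs'.tsum_const_smul γ, hs.tsum_eq_zero_add]
  congr 1
  · simp
  · refine tsum_congr fun t => ?_
    rw [mulVec_smul, smul_smul, mulVec_mulVec, ← pow_succ', ← pow_succ']

end Matrix

section MDP

variable [Fintype S] [Fintype A] {P : S → A → S → ℝ} {pol : S → A → ℝ}

theorem Pmat_mem_colStochastic [DecidableEq S] (hP0 : ∀ s a s', 0 ≤ P s a s')
    (hP1 : ∀ s a, ∑ s', P s a s' = 1) (hpol0 : ∀ s a, 0 ≤ pol s a)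
    (hpol1 : ∀ s, ∑ a, pol s a = 1) : Pmat P pol ∈ colStochastic ℝ S := by
  refine mem_colStochastic_iff_sum.2
    ⟨fun s' s => sum_nonneg fun a _ => mul_nonneg (hP0 s a s') (hpol0 s a), fun s => ?_⟩
  simp only [Pmat]
  rw [sum_comm]
  simp only [← sum_mul, hP1, one_mul, hpol1]

theorem dFut_eq_add_smul_mulVec [DecidableEq S] {γ : ℝ} (hγ0 : 0 ≤ γ) (hγ1 : γ < 1)
    (hP : Pmat P pol ∈ colStochastic ℝ S) (μ : S → ℝ) :
    dFut γ P μ pol = (1 - γ) • μ + γ • Pmat P pol *ᵥ dFut γ P μ pol := by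
  have hd : dFut γ P μ pol = (1 - γ) • ∑' t : ℕ, γ ^ t • (Pmat P pol ^ t *ᵥ μ) := by
    ext s
    rw [dFut, Pi.smul_apply, tsum_apply (summable_pow_smul_pow_mulVec hP hγ0 hγ1 μ)]
    rfl
  rw [hd]
  nth_rewrite 1 [tsum_pow_smul_pow_mulVec_eq hP hγ0 hγ1]
  rw [smul_add, mulVec_smul, smul_comm]

theorem expected_td_error_eq (hP1 : ∀ s a, ∑ s', P s a s' = 1) (hpol1 : ∀ s, ∑ a, pol s a = 1)
    (γ : ℝ) (R : S → A → S → ℝ) (f : S → ℝ) (s : S) :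
    ∑ a, pol s a * ∑ s', P s a s' * (R s a s' + γ * f s' - f s)
      = ∑ a, pol s a * ∑ s', P s a s' * R s a s' + γ * (f ᵥ* Pmat P pol) s - f s := by
  simp only [vecMul, dotProduct, Pmat, mul_add, mul_sub, sum_add_distrib, sum_sub_distrib,
    ← sum_mul, hP1, one_mul, mul_sum, hpol1]
  congr 2
  rw [sum_comm]
  exact sum_congr rfl fun a _ => sum_congr rfl fun s' _ => by ring

end MDP

theorem return_eq_baseline_plus_td_general
    [Fintype S] [DecidableEq S] [Fintype A]
    (γ : ℝ) (hγ0 : 0 ≤ γ) (hγ1 : γ < 1)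
    (P : S → A → S → ℝ) (hP0 : ∀ s a s', 0 ≤ P s a s')
    (hP1 : ∀ s a, (∑ s', P s a s') = 1)
    (μ : S → ℝ)
    (R : S → A → S → ℝ) (f : S → ℝ)
    (pol : S → A → ℝ)
    (hpol0 : ∀ s a, 0 ≤ pol s a) (hpol1 : ∀ s, (∑ a, pol s a) = 1) :
    Jret γ P R μ pol
      = (∑ s, μ s * f s)
        + (1 / (1 - γ)) * ∑ s, dFut γ P μ pol s *
            (∑ a, pol s a * (∑ s', P s a s' * (R s a s' + γ * f s' - f s))) := by
  set d := dFut γ P μ pol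
  have hflow : d = (1 - γ) • μ + γ • Pmat P pol *ᵥ d :=
    dFut_eq_add_smul_mulVec hγ0 hγ1 (Pmat_mem_colStochastic hP0 hP1 hpol0 hpol1) μ
  have htd : ∑ s, d s * ∑ a, pol s a * ∑ s', P s a s' * (R s a s' + γ * f s' - f s)
      = ∑ s, d s * ∑ a, pol s a * ∑ s', P s a s' * R s a s'
        + d ⬝ᵥ (γ • (f ᵥ* Pmat P pol) - f) := by
    rw [dotProduct, ← sum_add_distrib]
    refine sum_congr rfl fun s _ => ?_
    rw [expected_td_error_eq hP1 hpol1, Pi.sub_apply, Pi.smul_apply, smul_eq_mul]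
    ring
  have hγ : 1 - γ ≠ 0 := (sub_pos.2 hγ1).ne'
  rw [Jret, htd, dotProduct_smul_vecMul_sub_of_eq hflow, dotProduct]
  field_simp
  ring

/-- For any `f : S → ℝ` and any policy `π`,
`J(π) = E_{s∼μ}[f(s)] + (1/(1-γ)) E_{s∼d^π, a∼π, s'∼P}[R(s,a,s') + γ f(s') - f(s)]`. -/
theorem return_eq_baseline_plus_td
    [Fintype S] [DecidableEq S] [Nonempty S] [Fintype A] [Nonempty A]
    (γ : ℝ) (hγ0 : 0 ≤ γ) (hγ1 : γ < 1)
    (P : S → A → S → ℝ) (hP0 : ∀ s a s', 0 ≤ P s a s')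
    (hP1 : ∀ s a, (∑ s', P s a s') = 1)
    (μ : S → ℝ) (hμ0 : ∀ s, 0 ≤ μ s) (hμ1 : (∑ s, μ s) = 1)
    (R : S → A → S → ℝ) (f : S → ℝ)
    (pol : S → A → ℝ)
    (hpol0 : ∀ s a, 0 ≤ pol s a) (hpol1 : ∀ s, (∑ a, pol s a) = 1) :
    Jret γ P R μ pol
      = (∑ s, μ s * f s)
        + (1 / (1 - γ)) * ∑ s, dFut γ P μ pol s *
            (∑ a, pol s a * (∑ s', P s a s' * (R s a s' + γ * f s' - f s))) :=
  return_eq_baseline_plus_td_general γ hγ0 hγ1 P hP0 hP1 μ R f pol hpol0 hpol1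
end
end

section
/- For any two policies π' and π and any probability distribution d^π on S, letting Δ = P_{π'} - P_π, the vector Δ d^π satisfies ‖Δ d^π‖₁ = ∑_{s'} |∑_s Δ(s'|s) d^π(s)| ≤ 2 E_{s∼d^π}[D_TV(π'‖π)[s]]. -/
/-!
Writing `Δ d` as a single sum over state–action pairs, it is the image of the signed vector
`(s, a) ↦ (π'(a|s) - π(a|s)) d(s)` under the stochastic kernel `(s, a) ↦ P(·|s,a)`. A
substochastic kernel does not increase the `ℓ¹` norm, and the `ℓ¹` norm of that vector is
`∑ₛ d(s) ∑ₐ |π'(a|s) - π(a|s)| = 2 E_{s∼d}[D_TV(π'‖π)[s]]`.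
-/

open BigOperators Finset Matrix

noncomputable section

variable {S A : Type*}

theorem sum_abs_sum_mul_le_sum_abs {ι κ : Type*} [Fintype ι] [Fintype κ] (K : κ → ι → ℝ)
    (hK0 : ∀ j i, 0 ≤ K j i) (hK1 : ∀ j, ∑ i, K j i ≤ 1) (v : κ → ℝ) :
    ∑ i, |∑ j, K j i * v j| ≤ ∑ j, |v j| :=
  calc ∑ i, |∑ j, K j i * v j|
      ≤ ∑ i, ∑ j, K j i * |v j| := by
        gcongr with i
        refine (abs_sum_le_sum_abs _ _).trans_eq (sum_congr rfl fun j _ => ?_)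
        rw [abs_mul, abs_of_nonneg (hK0 j i)]
    _ = ∑ j, (∑ i, K j i) * |v j| := by
        rw [sum_comm]
        simp_rw [sum_mul]
    _ ≤ ∑ j, |v j| := by
        gcongr with j
        exact mul_le_of_le_one_left (abs_nonneg _) (hK1 j)

theorem sum_Pmat_sub_mul_eq_sum_prod [Fintype S] [Fintype A] (P : S → A → S → ℝ)
    (pol pol' : S → A → ℝ) (d : S → ℝ) (s' : S) :
    ∑ s, (Pmat P pol' s' s - Pmat P pol s' s) * d s
      = ∑ p : S × A, P p.1 p.2 s' * ((pol' p.1 p.2 - pol p.1 p.2) * d p.1) := by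
  rw [Fintype.sum_prod_type]
  refine sum_congr rfl fun s _ => ?_
  rw [Pmat, Pmat, ← sum_sub_distrib, sum_mul]
  exact sum_congr rfl fun a _ => by ring

theorem sum_abs_sub_mul_eq_two_mul_sum_DTV [Fintype S] [Fintype A] (pol pol' : S → A → ℝ)
    (d : S → ℝ) (hd0 : ∀ s, 0 ≤ d s) :
    ∑ p : S × A, |(pol' p.1 p.2 - pol p.1 p.2) * d p.1| = 2 * ∑ s, d s * DTV pol' pol s := by
  rw [Fintype.sum_prod_type, mul_sum]
  refine sum_congr rfl fun s _ => ?_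
  simp_rw [abs_mul, abs_of_nonneg (hd0 s), ← sum_mul, DTV]
  ring

theorem delta_mulVec_l1_bound_general
    [Fintype S] [Fintype A]
    (P : S → A → S → ℝ) (hP0 : ∀ s a s', 0 ≤ P s a s')
    (hP1 : ∀ s a, (∑ s', P s a s') = 1)
    (d : S → ℝ) (hd0 : ∀ s, 0 ≤ d s)
    (pol pol' : S → A → ℝ) :
    (∑ s', |∑ s, (Pmat P pol' s' s - Pmat P pol s' s) * d s|)
      ≤ 2 * ∑ s, d s * DTV pol' pol s := by
  simp_rw [sum_Pmat_sub_mul_eq_sum_prod, ← sum_abs_sub_mul_eq_two_mul_sum_DTV pol pol' d hd0]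
  exact sum_abs_sum_mul_le_sum_abs (fun (p : S × A) s' => P p.1 p.2 s')
    (fun p => hP0 p.1 p.2) (fun p => (hP1 p.1 p.2).le) _

/-- For `Δ = P_{π'} - P_π` and a distribution `d`,
`‖Δ d‖₁ ≤ 2 E_{s∼d}[D_TV(π'‖π)[s]]`. -/
theorem delta_mulVec_l1_bound
    [Fintype S] [Fintype A] [Nonempty A]
    (P : S → A → S → ℝ) (hP0 : ∀ s a s', 0 ≤ P s a s')
    (hP1 : ∀ s a, (∑ s', P s a s') = 1)
    (d : S → ℝ) (hd0 : ∀ s, 0 ≤ d s) (hd1 : (∑ s, d s) = 1)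
    (pol pol' : S → A → ℝ)
    (hpol0 : ∀ s a, 0 ≤ pol s a) (hpol1 : ∀ s, (∑ a, pol s a) = 1)
    (hpol'0 : ∀ s a, 0 ≤ pol' s a) (hpol'1 : ∀ s, (∑ a, pol' s a) = 1) :
    (∑ s', |∑ s, (Pmat P pol' s' s - Pmat P pol s' s) * d s|)
      ≤ 2 * ∑ s, d s * DTV pol' pol s :=
  delta_mulVec_l1_bound_general P hP0 hP1 d hd0 pol pol'
end
end
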